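/- (BPDN special case, T = ∅.) Let y = Ax + w with x supported on N and A_N of full column rank. If ‖A'(y − A_N(A_N'A_N)^{-1}A_N'y)‖_∞ < γ·[1 − max_{ω∉N} ‖(A_N'A_N)^{-1}A_N'A_ω‖₁], then the BPDN problem min_b (1/2)‖y−Ab‖₂² + γ‖b‖₁ has a unique minimizer b̃ supported on N, and ‖b̃ − x‖_∞ ≤ γ‖(A_N'A_N)^{-1}‖_∞ + ‖(A_N'A_N)^{-1}A_N'‖_∞‖w‖_∞. -/

import Mathlib

open Matrix Finset

noncomputable section

variable {n m : ℕ}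

/-- Submatrix of columns of `A` indexed by `S`. -/
def cols (A : Matrix (Fin n) (Fin m) ℝ) (S : Finset (Fin m)) :
    Matrix (Fin n) {j // j ∈ S} ℝ := Matrix.of fun i j => A i j.1

/-- Subvector of `b` on indices in `S`. -/
def subv (b : Fin m → ℝ) (S : Finset (Fin m)) : {j // j ∈ S} → ℝ := fun j => b j.1

/-- `b` is supported on `S`. -/
def suppOn (b : Fin m → ℝ) (S : Finset (Fin m)) : Prop := ∀ j, j ∉ S → b j = 0

def l2v {k : Type*} [Fintype k] (v : k → ℝ) : ℝ := Real.sqrt (∑ i, v i ^ 2)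

def l1v {k : Type*} [Fintype k] (v : k → ℝ) : ℝ := ∑ i, |v i|

def linfv {k : Type*} [Fintype k] (v : k → ℝ) : ℝ := ⨆ i, |v i|

/-- ℓ¹ norm of the subvector of `b` on the complement of `T`. -/
def l1c (b : Fin m → ℝ) (T : Finset (Fin m)) : ℝ := ∑ j ∈ Tᶜ, |b j|

/-- Induced ℓ∞→ℓ∞ operator norm (max absolute row sum). -/
def matInf {k l : Type*} [Fintype k] [Fintype l] (B : Matrix k l ℝ) : ℝ :=
  ⨆ i, ∑ j, |B i j|

/-- Spectral norm (ℓ²→ℓ² operator norm). -/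
def spec {k l : Type*} [Fintype k] [Fintype l] (B : Matrix k l ℝ) : ℝ :=
  sSup ((fun x => l2v (B.mulVec x)) '' {x | l2v x ≤ 1})

/-- The modified-BPDN objective L(b) = (1/2)‖y − Ab‖₂² + γ‖b_{Tᶜ}‖₁. -/
def objL (A : Matrix (Fin n) (Fin m) ℝ) (y : Fin n → ℝ) (γ : ℝ) (T : Finset (Fin m))
    (b : Fin m → ℝ) : ℝ :=
  (1/2) * (∑ i, (y i - A.mulVec b i) ^ 2) + γ * l1c b T

/-- Orthogonal projector M = I − A_T (A_Tᵀ A_T)⁻¹ A_Tᵀ. -/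
def projM (A : Matrix (Fin n) (Fin m) ℝ) (T : Finset (Fin m)) : Matrix (Fin n) (Fin n) ℝ :=
  1 - cols A T * ((cols A T)ᵀ * cols A T)⁻¹ * (cols A T)ᵀ

/-- Least squares coefficients on `S` : (A_Sᵀ A_S)⁻¹ A_Sᵀ y. -/
def lsq (A : Matrix (Fin n) (Fin m) ℝ) (S : Finset (Fin m)) (y : Fin n → ℝ) :
    {j // j ∈ S} → ℝ :=
  ((cols A S)ᵀ * cols A S)⁻¹.mulVec ((cols A S)ᵀ.mulVec y)

/-- Least squares estimate on `S`, as a vector in ℝᵐ supported on `S`. -/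
def lsqFull (A : Matrix (Fin n) (Fin m) ℝ) (S : Finset (Fin m)) (y : Fin n → ℝ) :
    Fin m → ℝ := fun j => if h : j ∈ S then lsq A S y ⟨j, h⟩ else 0

/-- The matrix A_Δᵀ M A_Δ. -/
def schur (A : Matrix (Fin n) (Fin m) ℝ) (T Δ : Finset (Fin m)) :
    Matrix {j // j ∈ Δ} {j // j ∈ Δ} ℝ :=
  (cols A Δ)ᵀ * projM A T * cols A Δ

/-- The matrix (A_Tᵀ A_T)⁻¹ A_Tᵀ A_Δ (A_Δᵀ M A_Δ)⁻¹. -/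
def crossMat (A : Matrix (Fin n) (Fin m) ℝ) (T Δ : Finset (Fin m)) :
    Matrix {j // j ∈ T} {j // j ∈ Δ} ℝ :=
  ((cols A T)ᵀ * cols A T)⁻¹ * ((cols A T)ᵀ * cols A Δ) * (schur A T Δ)⁻¹

/-- The exact-recovery-coefficient quantity ‖(A_Δᵀ M A_Δ)⁻¹ A_Δᵀ M A_ω‖₁. -/
def erc (A : Matrix (Fin n) (Fin m) ℝ) (T Δ : Finset (Fin m)) (ω : Fin m) : ℝ :=
  l1v ((schur A T Δ)⁻¹.mulVec (((cols A Δ)ᵀ * projM A T).mulVec (fun i => A i ω)))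

/-- `δ` is a valid S-restricted isometry constant for `A`. -/
def RIP (A : Matrix (Fin n) (Fin m) ℝ) (S : ℕ) (δ : ℝ) : Prop :=
  0 ≤ δ ∧ ∀ (J : Finset (Fin m)), J.card ≤ S → ∀ x : Fin m → ℝ, suppOn x J →
    (1 - δ) * (∑ i, x i ^ 2) ≤ (∑ i, (A.mulVec x i) ^ 2) ∧
    (∑ i, (A.mulVec x i) ^ 2) ≤ (1 + δ) * (∑ i, x i ^ 2)

/-- `θ` is a valid (S,S')-restricted orthogonality constant for `A`. -/
def ROC (A : Matrix (Fin n) (Fin m) ℝ) (S S' : ℕ) (θ : ℝ) : Prop :=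
  0 ≤ θ ∧ ∀ (J J' : Finset (Fin m)), Disjoint J J' → J.card ≤ S → J'.card ≤ S' →
    ∀ x x' : Fin m → ℝ, suppOn x J → suppOn x' J' →
      |dotProduct (A.mulVec x) (A.mulVec x')| ≤ θ * l2v x * l2v x'

/-- `b` minimizes the modified-BPDN objective over vectors supported on `S`. -/
def IsRestrMin (A : Matrix (Fin n) (Fin m) ℝ) (y : Fin n → ℝ) (γ : ℝ)
    (T S : Finset (Fin m)) (b : Fin m → ℝ) : Prop :=
  suppOn b S ∧ ∀ b', suppOn b' S → objL A y γ T b ≤ objL A y γ T b'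

/-- `g` is a subgradient of `b ↦ ‖b_{Tᶜ}‖₁` at `b`. -/
def IsSubgrad (T : Finset (Fin m)) (b g : Fin m → ℝ) : Prop :=
  (∀ j, j ∈ T → g j = 0) ∧
  ∀ j, j ∉ T → |g j| ≤ 1 ∧ (b j ≠ 0 → g j = Real.sign (b j))

/-!
The problem restricted to vectors supported on `N` has a minimizer `p`, since the objective is
continuous and coercive. Perturbing one coordinate of `p` at a time shows that the correlation
`c = Aᵀ(y - A p)` satisfies `|c_j| ≤ γ` and `c_j p_j = γ |p_j|` on `N`. By the normal equations on
`N`, `y - A p` is the least-squares residual plus `A_N (A_NᵀA_N)⁻¹ c_N`, so the hypothesis gives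
`|c_ω| < γ` off `N`. Thus `c / γ` is a subgradient of `‖·‖₁` at `p`, and
`L(b) - L(p) = ½‖A(b - p)‖² + ∑ⱼ (γ |b_j| - c_j b_j)` with both terms nonnegative. Equality forces
`b` to vanish off `N` and `A(b - p) = 0`, hence `b = p` by full column rank. Finally
`p_N - x_N = (A_NᵀA_N)⁻¹A_Nᵀ w - (A_NᵀA_N)⁻¹ c_N` gives the `ℓ∞` bound.
-/

section Norms

variable {k l : Type*} [Fintype k] [Fintype l]

lemma abs_le_linfv (v : k → ℝ) (i : k) : |v i| ≤ linfv v :=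
  le_ciSup (f := fun i => |v i|) (Set.finite_range _).bddAbove i

lemma linfv_nonneg (v : k → ℝ) : 0 ≤ linfv v :=
  Real.iSup_nonneg fun _ => abs_nonneg _

lemma linfv_le {v : k → ℝ} {C : ℝ} (hC : 0 ≤ C) (h : ∀ i, |v i| ≤ C) : linfv v ≤ C :=
  Real.iSup_le h hC

lemma sum_abs_le_matInf (B : Matrix k l ℝ) (i : k) : ∑ j, |B i j| ≤ matInf B :=
  le_ciSup (f := fun i => ∑ j, |B i j|) (Set.finite_range _).bddAbove i

lemma matInf_nonneg (B : Matrix k l ℝ) : 0 ≤ matInf B :=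
  Real.iSup_nonneg fun _ => Finset.sum_nonneg fun _ _ => abs_nonneg _

lemma abs_dotProduct_le_l1v_mul {v w : k → ℝ} {C : ℝ} (hw : ∀ j, |w j| ≤ C) :
    |v ⬝ᵥ w| ≤ l1v v * C := by
  rw [l1v, Finset.sum_mul]
  refine (Finset.abs_sum_le_sum_abs _ _).trans (Finset.sum_le_sum fun j _ => ?_)
  rw [abs_mul]
  exact mul_le_mul_of_nonneg_left (hw j) (abs_nonneg _)

lemma abs_mulVec_le_matInf_mul (B : Matrix k l ℝ) {v : l → ℝ} {C : ℝ} (hC : 0 ≤ C)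
    (hv : ∀ j, |v j| ≤ C) (i : k) : |(B *ᵥ v) i| ≤ matInf B * C :=
  calc |(B *ᵥ v) i| ≤ l1v (B i) * C := abs_dotProduct_le_l1v_mul hv
    _ ≤ matInf B * C := mul_le_mul_of_nonneg_right (sum_abs_le_matInf B i) hC

end Norms

lemma nonneg_of_forall_mul_add_sq_nonneg {α β ε : ℝ} (hε : 0 < ε)
    (h : ∀ t, 0 < t → t < ε → 0 ≤ α * t + β * t ^ 2) : 0 ≤ α := by
  have hlim : Filter.Tendsto (fun t => α + β * t) (nhdsWithin 0 (Set.Ioi 0)) (nhds α) := by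
    have : Continuous fun t : ℝ => α + β * t := by fun_prop
    simpa using (this.tendsto 0).mono_left nhdsWithin_le_nhds
  refine ge_of_tendsto hlim ?_
  filter_upwards [Ioo_mem_nhdsGT hε] with t ⟨ht0, htε⟩
  refine (mul_nonneg_iff_of_pos_left ht0).mp ?_
  linarith [h t ht0 htε]

/-- If `0` minimizes `t ↦ q t² - c t + γ |a + t|`, then `c` lies in `γ • ∂|·|(a)`. -/
lemma abs_le_and_mul_eq_of_forall_le {c q a γ : ℝ} (hγ : 0 ≤ γ)
    (h : ∀ t, c * t ≤ q * t ^ 2 + γ * (|a + t| - |a|)) : |c| ≤ γ ∧ c * a = γ * |a| := by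
  have hle : c ≤ γ := by
    refine sub_nonneg.mp (nonneg_of_forall_mul_add_sq_nonneg (β := q) one_pos fun t ht _ => ?_)
    have hmin := h t
    have hγt : γ * (|a + t| - |a|) ≤ γ * t := mul_le_mul_of_nonneg_left
      (by linarith [abs_add_le a t, abs_of_pos ht]) hγ
    linarith
  have hge : -γ ≤ c := by
    refine neg_le_iff_add_nonneg.mpr (nonneg_of_forall_mul_add_sq_nonneg (β := q) one_pos
      fun t ht _ => ?_)
    have hmin := h (-t)
    have hγt : γ * (|a + -t| - |a|) ≤ γ * t := mul_le_mul_of_nonneg_left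
      (by linarith [abs_add_le a (-t), abs_neg t, abs_of_pos ht]) hγ
    rw [neg_sq] at hmin
    linarith
  refine ⟨abs_le.mpr ⟨hge, hle⟩, ?_⟩
  rcases lt_trichotomy a 0 with ha | rfl | ha
  · have : 0 ≤ -γ - c := nonneg_of_forall_mul_add_sq_nonneg (β := q) (neg_pos.mpr ha)
      fun t ht hta => by
        have := h t
        rw [abs_of_neg ha, abs_of_neg (by linarith : a + t < 0)] at this
        linarith
    rw [abs_of_neg ha, le_antisymm (by linarith) hge]
    ring
  · simp
  · have : 0 ≤ c - γ := nonneg_of_forall_mul_add_sq_nonneg (β := q) ha fun t ht hta => by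
      have := h (-t)
      rw [abs_of_pos ha, abs_of_pos (by linarith : 0 < a + -t), neg_sq] at this
      linarith
    rw [abs_of_pos ha, le_antisymm hle (by linarith)]

section Objective

variable (A : Matrix (Fin n) (Fin m) ℝ) (y : Fin n → ℝ) (γ : ℝ)

lemma objL_empty_eq (p b : Fin m → ℝ) :
    objL A y γ ∅ b = objL A y γ ∅ p + (1 / 2) * ∑ i, (A *ᵥ (b - p)) i ^ 2
      - (Aᵀ *ᵥ (y - A *ᵥ p)) ⬝ᵥ (b - p) + γ * (∑ j, |b j| - ∑ j, |p j|) := by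
  have hsq : ∑ i, (y i - (A *ᵥ b) i) ^ 2 = ∑ i, (y i - (A *ᵥ p) i) ^ 2
      - 2 * ((y - A *ᵥ p) ⬝ᵥ (A *ᵥ (b - p))) + ∑ i, (A *ᵥ (b - p)) i ^ 2 := by
    simp only [dotProduct, Finset.mul_sum, ← Finset.sum_sub_distrib, ← Finset.sum_add_distrib]
    refine Finset.sum_congr rfl fun i _ => ?_
    simp only [mulVec_sub, Pi.sub_apply]
    ring
  rw [mulVec_transpose, ← dotProduct_mulVec]
  simp only [objL, l1c, compl_empty, hsq]
  ring

lemma objL_add_single (p : Fin m → ℝ) (j : Fin m) (t : ℝ) :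
    objL A y γ ∅ (p + Pi.single j t) = objL A y γ ∅ p + (∑ i, A i j ^ 2) / 2 * t ^ 2
      - (Aᵀ *ᵥ (y - A *ᵥ p)) j * t + γ * (|p j + t| - |p j|) := by
  have hA : A *ᵥ Pi.single j t = fun i => A i j * t := by
    ext i
    simp [mulVec, dotProduct, Pi.single_apply]
  have habs : ∑ k, |(p + Pi.single j t : Fin m → ℝ) k| - ∑ k, |p k| = |p j + t| - |p j| := by
    rw [← Finset.sum_sub_distrib, Finset.sum_eq_single j (fun k _ hk => by simp [hk]) (by simp)]
    simp
  rw [objL_empty_eq A y γ p, add_sub_cancel_left, hA, dotProduct_single, habs,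
    Finset.sum_div, Finset.sum_mul, Finset.mul_sum]
  congr 3
  exact Finset.sum_congr rfl fun i _ => by ring

lemma isClosed_setOf_suppOn (N : Finset (Fin m)) : IsClosed {b : Fin m → ℝ | suppOn b N} := by
  simp only [suppOn, Set.ofPred_forall]
  exact isClosed_iInter fun j => isClosed_iInter fun _ => isClosed_eq (continuous_apply j)
    continuous_const

lemma mul_norm_le_objL (b : Fin m → ℝ) (hγ : 0 ≤ γ) : γ * ‖b‖ ≤ objL A y γ ∅ b := by
  have hnorm : ‖b‖ ≤ ∑ j, |b j| :=
    (pi_norm_le_iff_of_nonneg (Finset.sum_nonneg fun j _ => abs_nonneg _)).mpr fun j =>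
      Finset.single_le_sum (f := fun j => |b j|) (fun k _ => abs_nonneg _) (Finset.mem_univ j)
  have hsq : 0 ≤ (1 / 2 : ℝ) * ∑ i, (y i - (A *ᵥ b) i) ^ 2 := by positivity
  simp only [objL, l1c, compl_empty]
  nlinarith [mul_le_mul_of_nonneg_left hnorm hγ]

lemma exists_isRestrMin (hγ : 0 < γ) (N : Finset (Fin m)) : ∃ p, IsRestrMin A y γ ∅ N p := by
  have hcont : Continuous (objL A y γ ∅) := by
    unfold objL l1c
    fun_prop
  have hcoer : Filter.Tendsto (objL A y γ ∅) (Filter.cocompact _) Filter.atTop :=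
    Filter.tendsto_atTop_mono (fun b => mul_norm_le_objL A y γ b hγ.le)
      (tendsto_norm_cocompact_atTop.const_mul_atTop hγ)
  obtain ⟨p, hpN, hpmin⟩ := hcont.continuousOn.exists_isMinOn' (isClosed_setOf_suppOn N)
    (x₀ := 0) (fun _ _ => rfl) ((hcoer.eventually_ge_atTop _).filter_mono inf_le_left)
  exact ⟨p, hpN, fun b hb => hpmin hb⟩

end Objective

lemma mul_le_mul_abs_of_abs_le {c γ : ℝ} (hc : |c| ≤ γ) (b : ℝ) : c * b ≤ γ * |b| :=
  (le_abs_self _).trans <| (abs_mul c b).trans_le <| mul_le_mul_of_nonneg_right hc (abs_nonneg b)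

section Certificate

variable {A : Matrix (Fin n) (Fin m) ℝ} {y : Fin n → ℝ} {γ : ℝ} {p : Fin m → ℝ}

lemma IsRestrMin.abs_le_and_mul_eq {N : Finset (Fin m)} (hγ : 0 ≤ γ)
    (hp : IsRestrMin A y γ ∅ N p) {j : Fin m} (hj : j ∈ N) :
    |(Aᵀ *ᵥ (y - A *ᵥ p)) j| ≤ γ ∧ (Aᵀ *ᵥ (y - A *ᵥ p)) j * p j = γ * |p j| := by
  refine abs_le_and_mul_eq_of_forall_le (q := (∑ i, A i j ^ 2) / 2) hγ fun t => ?_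
  have hsupp : suppOn (p + Pi.single j t) N := fun k hk => by
    simp [hp.1 k hk, ne_of_mem_of_not_mem hj hk |>.symm]
  have := hp.2 _ hsupp
  rw [objL_add_single] at this
  linarith

lemma objL_eq_add_of_certificate (hcp : ∀ j, (Aᵀ *ᵥ (y - A *ᵥ p)) j * p j = γ * |p j|)
    (b : Fin m → ℝ) :
    objL A y γ ∅ b = objL A y γ ∅ p + (1 / 2) * ∑ i, (A *ᵥ (b - p)) i ^ 2
      + ∑ j, (γ * |b j| - (Aᵀ *ᵥ (y - A *ᵥ p)) j * b j) := by
  have hdot : (Aᵀ *ᵥ (y - A *ᵥ p)) ⬝ᵥ (b - p)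
      = ∑ j, (Aᵀ *ᵥ (y - A *ᵥ p)) j * b j - γ * ∑ j, |p j| := by
    simp only [dotProduct, Pi.sub_apply, mul_sub, Finset.sum_sub_distrib, hcp, Finset.mul_sum]
  rw [objL_empty_eq A y γ p b, hdot, Finset.sum_sub_distrib, ← Finset.mul_sum]
  ring

lemma objL_le_of_certificate (hc : ∀ j, |(Aᵀ *ᵥ (y - A *ᵥ p)) j| ≤ γ)
    (hcp : ∀ j, (Aᵀ *ᵥ (y - A *ᵥ p)) j * p j = γ * |p j|) (b : Fin m → ℝ) :
    objL A y γ ∅ p ≤ objL A y γ ∅ b := by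
  rw [objL_eq_add_of_certificate hcp b]
  have := Finset.sum_nonneg fun j (_ : j ∈ Finset.univ) =>
    sub_nonneg.mpr (mul_le_mul_abs_of_abs_le (hc j) (b j))
  have : 0 ≤ ∑ i, (A *ᵥ (b - p)) i ^ 2 := by positivity
  linarith

end Certificate

section ColumnSubmatrix

variable {A : Matrix (Fin n) (Fin m) ℝ} {N : Finset (Fin m)}

lemma mulVec_eq_cols_mulVec_subv {b : Fin m → ℝ} (hb : suppOn b N) :
    A *ᵥ b = cols A N *ᵥ subv b N := by
  ext i
  simp only [mulVec, dotProduct, cols, subv, of_apply]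
  rw [← Finset.sum_subset (Finset.subset_univ N) fun j _ hj => by rw [hb j hj, mul_zero],
    ← Finset.sum_attach N, Finset.univ_eq_attach]

lemma eq_zero_of_mulVec_eq_zero (hrank : IsUnit ((cols A N)ᵀ * cols A N)) {v : Fin m → ℝ}
    (hv : suppOn v N) (hAv : A *ᵥ v = 0) : v = 0 := by
  have hvN : subv v N = 0 := mulVec_injective_iff_isUnit.mpr hrank <| by
    rw [← mulVec_mulVec, ← mulVec_eq_cols_mulVec_subv hv, hAv, mulVec_zero, mulVec_zero]
  ext j
  by_cases hj : j ∈ N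
  · exact congrFun hvN ⟨j, hj⟩
  · exact hv j hj

lemma lsq_sub_mulVec_residual (hrank : IsUnit ((cols A N)ᵀ * cols A N)) (y : Fin n → ℝ)
    (u : {j // j ∈ N} → ℝ) :
    lsq A N y - ((cols A N)ᵀ * cols A N)⁻¹ *ᵥ ((cols A N)ᵀ *ᵥ (y - cols A N *ᵥ u)) = u := by
  rw [mulVec_sub, mulVec_sub, mulVec_mulVec u, mulVec_mulVec u,
    nonsing_inv_mul _ ((isUnit_iff_isUnit_det _).mp hrank), one_mulVec, lsq, sub_sub_cancel]

end ColumnSubmatrix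

section Recovery

variable {A : Matrix (Fin n) (Fin m) ℝ} {N : Finset (Fin m)} {y : Fin n → ℝ} {γ : ℝ}
  {p : Fin m → ℝ}

lemma eq_of_objL_le_of_certificate (hrank : IsUnit ((cols A N)ᵀ * cols A N))
    (hpN : suppOn p N) (hc : ∀ j, |(Aᵀ *ᵥ (y - A *ᵥ p)) j| ≤ γ)
    (hcN : ∀ j ∉ N, |(Aᵀ *ᵥ (y - A *ᵥ p)) j| < γ)
    (hcp : ∀ j, (Aᵀ *ᵥ (y - A *ᵥ p)) j * p j = γ * |p j|) {b : Fin m → ℝ}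
    (hb : objL A y γ ∅ b ≤ objL A y γ ∅ p) : b = p := by
  set c := Aᵀ *ᵥ (y - A *ᵥ p)
  have hterm : ∀ j ∈ Finset.univ, 0 ≤ γ * |b j| - c j * b j := fun j _ =>
    sub_nonneg.mpr (mul_le_mul_abs_of_abs_le (hc j) (b j))
  have hsq : ∀ i ∈ Finset.univ, 0 ≤ (A *ᵥ (b - p)) i ^ 2 := fun i _ => sq_nonneg _
  have hgap := objL_eq_add_of_certificate hcp b
  have hsq0 := (Finset.sum_eq_zero_iff_of_nonneg hsq).mp
    (by linarith [Finset.sum_nonneg hsq, Finset.sum_nonneg hterm])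
  have hterm0 := (Finset.sum_eq_zero_iff_of_nonneg hterm).mp
    (by linarith [Finset.sum_nonneg hsq, Finset.sum_nonneg hterm])
  have hbN : suppOn b N := fun j hj => by
    by_contra hbj
    have := mul_lt_mul_of_pos_right (hcN j hj) (abs_pos.mpr hbj)
    linarith [hterm0 j (Finset.mem_univ j), (le_abs_self (c j * b j)).trans_eq (abs_mul _ _)]
  refine sub_eq_zero.mp (eq_zero_of_mulVec_eq_zero hrank (fun j hj => ?_) ?_)
  · rw [Pi.sub_apply, hbN j hj, hpN j hj, sub_zero]
  · ext i
    exact pow_eq_zero_iff two_ne_zero |>.mp (hsq0 i (Finset.mem_univ i))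

lemma abs_transpose_mulVec_residual_le (hrank : IsUnit ((cols A N)ᵀ * cols A N))
    (hpN : suppOn p N) (hc : ∀ j ∈ N, |(Aᵀ *ᵥ (y - A *ᵥ p)) j| ≤ γ) (ω : Fin m) :
    |(Aᵀ *ᵥ (y - A *ᵥ p)) ω| ≤ linfv (Aᵀ *ᵥ (y - cols A N *ᵥ lsq A N y))
      + l1v (((cols A N)ᵀ * cols A N)⁻¹ *ᵥ ((cols A N)ᵀ *ᵥ fun i => A i ω)) * γ := by
  set AN := cols A N
  set B := (ANᵀ * AN)⁻¹
  have hr : y - A *ᵥ p = (y - AN *ᵥ lsq A N y) + AN *ᵥ (B *ᵥ (ANᵀ *ᵥ (y - A *ᵥ p))) := by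
    have hp := lsq_sub_mulVec_residual hrank y (subv p N)
    rw [← mulVec_eq_cols_mulVec_subv hpN] at hp
    calc y - A *ᵥ p = y - AN *ᵥ subv p N := by rw [mulVec_eq_cols_mulVec_subv hpN]
      _ = _ := by
        rw [← hp, mulVec_sub]
        abel
  have hB : Bᵀ = B := by rw [transpose_nonsing_inv, transpose_mul, transpose_transpose]
  have hcross : (Aᵀ *ᵥ (AN *ᵥ (B *ᵥ (ANᵀ *ᵥ (y - A *ᵥ p))))) ω
      = (B *ᵥ (ANᵀ *ᵥ fun i => A i ω)) ⬝ᵥ (ANᵀ *ᵥ (y - A *ᵥ p)) := by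
    change (fun i => A i ω) ⬝ᵥ _ = _
    rw [dotProduct_mulVec, dotProduct_mulVec, ← mulVec_transpose, ← mulVec_transpose, hB]
  calc |(Aᵀ *ᵥ (y - A *ᵥ p)) ω|
      = |(Aᵀ *ᵥ (y - AN *ᵥ lsq A N y)) ω
          + (B *ᵥ (ANᵀ *ᵥ fun i => A i ω)) ⬝ᵥ (ANᵀ *ᵥ (y - A *ᵥ p))| := by
        nth_rewrite 1 [hr]
        rw [mulVec_add, Pi.add_apply, hcross]
    _ ≤ _ := (abs_add_le _ _).trans <| add_le_add (abs_le_linfv _ ω)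
        (abs_dotProduct_le_l1v_mul fun j => hc j j.2)

lemma linfv_sub_le (hrank : IsUnit ((cols A N)ᵀ * cols A N)) (hγ : 0 ≤ γ) (hpN : suppOn p N)
    (hc : ∀ j ∈ N, |(Aᵀ *ᵥ (y - A *ᵥ p)) j| ≤ γ) {x : Fin m → ℝ} {wn : Fin n → ℝ}
    (hx : suppOn x N) (hy : y = A *ᵥ x + wn) :
    linfv (p - x) ≤ γ * matInf ((cols A N)ᵀ * cols A N)⁻¹
      + matInf (((cols A N)ᵀ * cols A N)⁻¹ * (cols A N)ᵀ) * linfv wn := by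
  set AN := cols A N
  set B := (ANᵀ * AN)⁻¹
  have hxN : subv x N = lsq A N y - (B * ANᵀ) *ᵥ wn := by
    have hw : y - AN *ᵥ subv x N = wn := by
      rw [hy, mulVec_eq_cols_mulVec_subv hx, add_sub_cancel_left]
    have hx' := lsq_sub_mulVec_residual hrank y (subv x N)
    rw [hw] at hx'
    rw [← mulVec_mulVec, hx']
  have hpN' : subv p N = lsq A N y - B *ᵥ (ANᵀ *ᵥ (y - A *ᵥ p)) := by
    have hp' := lsq_sub_mulVec_residual hrank y (subv p N)
    rw [← mulVec_eq_cols_mulVec_subv hpN] at hp'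
    exact hp'.symm
  have hbound : 0 ≤ γ * matInf B + matInf (B * ANᵀ) * linfv wn :=
    add_nonneg (mul_nonneg hγ (matInf_nonneg _)) (mul_nonneg (matInf_nonneg _) (linfv_nonneg _))
  refine linfv_le hbound fun j => ?_
  by_cases hj : j ∈ N
  · have hdiff : (p - x) j
        = ((B * ANᵀ) *ᵥ wn) ⟨j, hj⟩ - (B *ᵥ (ANᵀ *ᵥ (y - A *ᵥ p))) ⟨j, hj⟩ := by
      change subv p N ⟨j, hj⟩ - subv x N ⟨j, hj⟩ = _
      rw [hpN', hxN, Pi.sub_apply, Pi.sub_apply]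
      ring
    calc |(p - x) j|
        ≤ |((B * ANᵀ) *ᵥ wn) ⟨j, hj⟩| + |(B *ᵥ (ANᵀ *ᵥ (y - A *ᵥ p))) ⟨j, hj⟩| := by
          rw [hdiff]
          exact abs_sub _ _
      _ ≤ matInf (B * ANᵀ) * linfv wn + matInf B * γ :=
          add_le_add (abs_mulVec_le_matInf_mul _ (linfv_nonneg wn) (abs_le_linfv wn) _)
            (abs_mulVec_le_matInf_mul _ hγ (fun i : {j // j ∈ N} => hc i i.2) _)
      _ = _ := by ring
  · rw [Pi.sub_apply, hpN j hj, hx j hj, sub_zero, abs_zero]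
    exact hbound

end Recovery

/-- BPDN special case (T = ∅), unique minimizer and ℓ∞ bound. -/
theorem stmt12 (n m : ℕ) (A : Matrix (Fin n) (Fin m) ℝ) (N : Finset (Fin m))
    (hrank : IsUnit ((cols A N)ᵀ * cols A N))
    (γ : ℝ) (hγ : 0 < γ) (x : Fin m → ℝ) (hx : suppOn x N)
    (wn : Fin n → ℝ) (y : Fin n → ℝ) (hy : y = A.mulVec x + wn)
    (hcond : ∀ ω, ω ∉ N →
      linfv (Aᵀ.mulVec (y - (cols A N).mulVec (lsq A N y))) <
        γ * (1 - l1v (((cols A N)ᵀ * cols A N)⁻¹.mulVec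
              ((cols A N)ᵀ.mulVec (fun i => A i ω))))) :
    ∃ btil : Fin m → ℝ,
      (∀ b, objL A y γ ∅ btil ≤ objL A y γ ∅ b) ∧
      (∀ b, (∀ b', objL A y γ ∅ b ≤ objL A y γ ∅ b') → b = btil) ∧
      suppOn btil N ∧
      linfv (btil - x) ≤
        γ * matInf (((cols A N)ᵀ * cols A N)⁻¹) +
          matInf (((cols A N)ᵀ * cols A N)⁻¹ * (cols A N)ᵀ) * linfv wn := by
  obtain ⟨p, hp⟩ := exists_isRestrMin A y γ hγ N
  have hkkt := fun j (hj : j ∈ N) => hp.abs_le_and_mul_eq hγ.le hj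
  have hoff : ∀ ω ∉ N, |(Aᵀ *ᵥ (y - A *ᵥ p)) ω| < γ := fun ω hω => by
    have := abs_transpose_mulVec_residual_le hrank hp.1 (fun j hj => (hkkt j hj).1) ω
    linarith [hcond ω hω]
  have hc : ∀ j, |(Aᵀ *ᵥ (y - A *ᵥ p)) j| ≤ γ := fun j =>
    if hj : j ∈ N then (hkkt j hj).1 else (hoff j hj).le
  have hcp : ∀ j, (Aᵀ *ᵥ (y - A *ᵥ p)) j * p j = γ * |p j| := fun j =>
    if hj : j ∈ N then (hkkt j hj).2 else by simp [hp.1 j hj]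
  exact ⟨p, objL_le_of_certificate hc hcp,
    fun b hb => eq_of_objL_le_of_certificate hrank hp.1 hc hoff hcp (hb p), hp.1,
    linfv_sub_le hrank hγ.le hp.1 (fun j hj => (hkkt j hj).1) hx hy⟩
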